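/- arXiv:1804.05378 — 4 statements merged into one kernel-verified Lean document; each statement's English description precedes it below -/
import Mathlib

section
/- Suppose c_k(w) ≠ 0 for every k ∈ {1,…,K}, and suppose the decision d* ∈ {−1,1}^K defined by d*_k = sign(c_k(w)) minimizes the outcome weighted 0-1 risk, i.e. R01(d*) = min_{d ∈ {−1,1}^K} R01(d). Then every f ∈ {−1,1}^K with RH(f) = min_{d ∈ {−1,1}^K} RH(d) also satisfies R01(f) = min_{d ∈ {−1,1}^K} R01(d). (Fisher consistency of outcome weighted Hamming loss, pointwise form at a fixed covariate value.) -/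
open Finset

noncomputable section

/-- The cube `{-1,1}^K` as a finite set of real vectors. -/
def cube (K : ℕ) : Finset (Fin K → ℝ) :=
  Finset.univ.image (fun b : Fin K → Bool => fun k => if b k then 1 else -1)

lemma cube_nonempty (K : ℕ) : (cube K).Nonempty :=
  Finset.Nonempty.image Finset.univ_nonempty _

lemma univ_fin_nonempty {K : ℕ} (hK : 1 ≤ K) :
    (Finset.univ : Finset (Fin K)).Nonempty :=
  ⟨⟨0, hK⟩, Finset.mem_univ _⟩

/-- Outcome weighted 0-1 risk at a fixed covariate value:
`R01(d) = Σ_{a ∈ {-1,1}^K} w(a) · 1{a ≠ d}`. -/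
def R01 {K : ℕ} (w : (Fin K → ℝ) → ℝ) (d : Fin K → ℝ) : ℝ :=
  ∑ a ∈ cube K, w a * (if a = d then 0 else 1)

/-- Outcome weighted Hamming risk at a fixed covariate value:
`RH(d) = Σ_{a ∈ {-1,1}^K} w(a) · (1/K) Σ_k 1{a_k ≠ d_k}`. -/
def RH {K : ℕ} (w : (Fin K → ℝ) → ℝ) (d : Fin K → ℝ) : ℝ :=
  ∑ a ∈ cube K, w a * ((1 / (K : ℝ)) * ∑ k : Fin K, if a k = d k then 0 else 1)

/-- Contrast of treatment `k`:
`c_k(w) = Σ_{a : a_k = 1} w(a) - Σ_{a : a_k = -1} w(a)`. -/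
def contrast {K : ℕ} (w : (Fin K → ℝ) → ℝ) (k : Fin K) : ℝ :=
  ∑ a ∈ (cube K).filter (fun a => a k = 1), w a
    - ∑ a ∈ (cube K).filter (fun a => a k = -1), w a

/-
Up to the constant total weight, `K · RH(d)` is `-(1/2) Σ_k d_k c_k(w)` on the cube, so minimising the
Hamming risk means maximising `Σ_k d_k c_k(w)` coordinatewise. When no contrast vanishes, the unique
maximiser is `d* = sign c(w)`; hence every Hamming minimiser equals `d*`, which minimises the 0-1 risk.
-/

lemma eq_one_or_eq_neg_one_of_mem_cube {K : ℕ} {d : Fin K → ℝ} (hd : d ∈ cube K) (k : Fin K) :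
    d k = 1 ∨ d k = -1 := by
  obtain ⟨b, -, rfl⟩ := Finset.mem_image.mp hd
  by_cases h : b k <;> simp [h]

lemma contrast_eq_sum_mul {K : ℕ} (w : (Fin K → ℝ) → ℝ) (k : Fin K) :
    contrast w k = ∑ a ∈ cube K, w a * a k := by
  rw [contrast, Finset.sum_filter, Finset.sum_filter, ← Finset.sum_sub_distrib]
  refine Finset.sum_congr rfl fun a ha => ?_
  rcases eq_one_or_eq_neg_one_of_mem_cube ha k with h | h <;> norm_num [h]

lemma ite_eq_zero_one_eq_one_sub_mul_div_two {x y : ℝ} (hx : x = 1 ∨ x = -1)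
    (hy : y = 1 ∨ y = -1) : (if x = y then (0 : ℝ) else 1) = (1 - x * y) / 2 := by
  rcases hx with rfl | rfl <;> rcases hy with rfl | rfl <;> norm_num

lemma RH_eq {K : ℕ} (w : (Fin K → ℝ) → ℝ) {d : Fin K → ℝ} (hd : d ∈ cube K) :
    RH w d = (1 / (K : ℝ)) *
      ((K * ∑ a ∈ cube K, w a - ∑ k : Fin K, d k * contrast w k) / 2) := by
  calc RH w d = ∑ a ∈ cube K, w a * ((1 / (K : ℝ)) * ∑ k : Fin K, (1 - a k * d k) / 2) := by
        refine Finset.sum_congr rfl fun a ha => ?_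
        simp only [ite_eq_zero_one_eq_one_sub_mul_div_two (eq_one_or_eq_neg_one_of_mem_cube ha _)
          (eq_one_or_eq_neg_one_of_mem_cube hd _)]
    _ = ∑ a ∈ cube K, (1 / (K : ℝ)) * ((K * w a - ∑ k : Fin K, d k * (w a * a k)) / 2) := by
        refine Finset.sum_congr rfl fun a _ => ?_
        have hlin : ∑ k : Fin K, d k * (w a * a k) = w a * ∑ k : Fin K, a k * d k := by
          rw [Finset.mul_sum]
          exact Finset.sum_congr rfl fun k _ => by ring
        rw [hlin, ← Finset.sum_div, Finset.sum_sub_distrib, Finset.sum_const, Finset.card_univ,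
          Fintype.card_fin, nsmul_one]
        ring
    _ = (1 / (K : ℝ)) *
          ((K * ∑ a ∈ cube K, w a - ∑ k : Fin K, d k * ∑ a ∈ cube K, w a * a k) / 2) := by
        simp only [← Finset.mul_sum, ← Finset.sum_div, Finset.sum_sub_distrib]
        rw [Finset.sum_comm]
        simp only [Finset.mul_sum]
    _ = _ := by simp only [contrast_eq_sum_mul]

lemma RH_le_RH_iff {K : ℕ} (hK : 1 ≤ K) (w : (Fin K → ℝ) → ℝ) {d e : Fin K → ℝ}
    (hd : d ∈ cube K) (he : e ∈ cube K) :
    RH w d ≤ RH w e ↔ ∑ k, e k * contrast w k ≤ ∑ k, d k * contrast w k := by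
  have hK' : (0 : ℝ) < 1 / K := by positivity
  rw [RH_eq w hd, RH_eq w he, mul_le_mul_iff_right₀ hK']
  constructor <;> intro h <;> linarith

lemma mul_le_sign_mul {x : ℝ} (hx : x = 1 ∨ x = -1) (c : ℝ) : x * c ≤ Real.sign c * c := by
  rcases lt_trichotomy c 0 with hc | rfl | hc
  · rw [Real.sign_of_neg hc]; rcases hx with rfl | rfl <;> linarith
  · simp
  · rw [Real.sign_of_pos hc]; rcases hx with rfl | rfl <;> linarith

lemma eq_sign_of_sum_sign_mul_le {ι : Type*} [Fintype ι] {x c : ι → ℝ}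
    (hx : ∀ i, x i = 1 ∨ x i = -1) (hc : ∀ i, c i ≠ 0)
    (h : ∑ i, Real.sign (c i) * c i ≤ ∑ i, x i * c i) : x = fun i => Real.sign (c i) := by
  have hle : ∀ i ∈ Finset.univ, x i * c i ≤ Real.sign (c i) * c i :=
    fun i _ => mul_le_sign_mul (hx i) (c i)
  have heq := (Finset.sum_eq_sum_iff_of_le hle).mp (le_antisymm (Finset.sum_le_sum hle) h)
  exact funext fun i => mul_right_cancel₀ (hc i) (heq i (Finset.mem_univ i))

theorem fisher_consistency_hamming_pointwise_general
    (K : ℕ) (hK : 1 ≤ K) (w : (Fin K → ℝ) → ℝ)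
    (hc : ∀ k : Fin K, contrast w k ≠ 0)
    (dstar : Fin K → ℝ) (hdcube : dstar ∈ cube K)
    (hdstar : ∀ k : Fin K, dstar k = Real.sign (contrast w k))
    (hopt : ∀ d ∈ cube K, R01 w dstar ≤ R01 w d)
    (f : Fin K → ℝ) (hf : f ∈ cube K)
    (hfmin : ∀ d ∈ cube K, RH w f ≤ RH w d) :
    ∀ d ∈ cube K, R01 w f ≤ R01 w d := by
  have hfd : f = dstar := by
    have hsum := (RH_le_RH_iff hK w hf hdcube).mp (hfmin dstar hdcube)
    rw [funext hdstar] at hsum ⊢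
    exact eq_sign_of_sum_sign_mul_le (eq_one_or_eq_neg_one_of_mem_cube hf) hc hsum
  rwa [hfd]

/-- Fisher consistency of the outcome weighted Hamming loss (pointwise form,
Theorem 1). -/
theorem fisher_consistency_hamming_pointwise
    (K : ℕ) (hK : 1 ≤ K) (w : (Fin K → ℝ) → ℝ)
    (hw : ∀ a ∈ cube K, 0 ≤ w a)
    (hc : ∀ k : Fin K, contrast w k ≠ 0)
    (dstar : Fin K → ℝ) (hdcube : dstar ∈ cube K)
    (hdstar : ∀ k : Fin K, dstar k = Real.sign (contrast w k))
    (hopt : ∀ d ∈ cube K, R01 w dstar ≤ R01 w d)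
    (f : Fin K → ℝ) (hf : f ∈ cube K)
    (hfmin : ∀ d ∈ cube K, RH w f ≤ RH w d) :
    ∀ d ∈ cube K, R01 w f ≤ R01 w d :=
  fisher_consistency_hamming_pointwise_general K hK w hc dstar hdcube hdstar hopt f hf hfmin
end
end

section
/- Let (Ω, 𝒜, μ) be a measure space and let W : Ω × {−1,1}^K → ℝ be such that for each a, x ↦ W(x,a) is measurable, W(x,a) ≥ 0 for all (x,a), and x ↦ Σ_a W(x,a) is μ-integrable. Suppose that for μ-almost every x there exist T(x) : {1,…,K} → ℝ, r(x) : {−1,1}^K → ℝ and m(x) ∈ ℝ with W(x,a) = Σ_{k : a_k = 1} T_k(x) + r_a(x) + m(x) for all a, and 2·max_a |r_a(x)| < min_k |T_k(x)|. For a measurable rule D : Ω → {−1,1}^K define R01(D) = ∫ Σ_a W(x,a)·1{a ≠ D(x)} dμ(x) and RH(D) = ∫ Σ_a W(x,a)·(1/K)·Σ_{k=1}^K 1{a_k ≠ D_k(x)} dμ(x). Then every measurable rule f with RH(f) = inf over measurable rules D of RH(D) also satisfies R01(f) = inf over measurable rules D of R01(D). (Theorem 2, integrated form.) -/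
open Finset

noncomputable section

lemma mem_cube_iff {K : ℕ} {a : Fin K → ℝ} :
    a ∈ cube K ↔ ∀ k, a k = 1 ∨ a k = -1 := by
  constructor
  · rintro h k
    simp only [cube, Finset.mem_image] at h
    obtain ⟨b, -, rfl⟩ := h
    by_cases hb : b k <;> simp [hb]
  · intro h
    simp only [cube, Finset.mem_image]
    refine ⟨fun k => if a k = 1 then true else false, Finset.mem_univ _, ?_⟩
    funext k
    rcases h k with h1 | h1 <;> simp [h1]
    norm_num

/-- the pointwise optimal rule -/
def dstar {K : ℕ} (w : (Fin K → ℝ) → ℝ) : Fin K → ℝ :=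
  fun k => if 0 < contrast w k then 1 else -1

lemma dstar_mem {K : ℕ} (w : (Fin K → ℝ) → ℝ) : dstar w ∈ cube K := by
  rw [mem_cube_iff]
  intro k
  by_cases h : 0 < contrast w k <;> simp [dstar, h]

def flipk {K : ℕ} (k : Fin K) (a : Fin K → ℝ) : Fin K → ℝ :=
  fun j => if j = k then -(a j) else a j

lemma flipk_mem {K : ℕ} (k : Fin K) {a : Fin K → ℝ} (ha : a ∈ cube K) :
    flipk k a ∈ cube K := by
  rw [mem_cube_iff] at ha ⊢
  intro j
  by_cases hj : j = k
  · subst hj; rcases ha j with h | h <;> simp [flipk, h]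
  · rcases ha j with h | h <;> simp [flipk, hj, h]

lemma flipk_flipk {K : ℕ} (k : Fin K) (a : Fin K → ℝ) : flipk k (flipk k a) = a := by
  funext j
  by_cases hj : j = k <;> simp [flipk, hj]

/-- sum over a_k = -1 equals sum over a_k = 1 of flipped -/
lemma sum_flip {K : ℕ} (k : Fin K) (w : (Fin K → ℝ) → ℝ) :
    ∑ a ∈ (cube K).filter (fun a => a k = -1), w a
      = ∑ a ∈ (cube K).filter (fun a => a k = 1), w (flipk k a) := by
  apply Finset.sum_nbij' (i := flipk k) (j := flipk k)
  · intro a ha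
    rw [Finset.mem_filter] at ha ⊢
    refine ⟨flipk_mem k ha.1, ?_⟩
    simp [flipk, ha.2]
  · intro a ha
    rw [Finset.mem_filter] at ha ⊢
    refine ⟨flipk_mem k ha.1, ?_⟩
    simp [flipk, ha.2]
  · intro a _; exact flipk_flipk k a
  · intro a _; exact flipk_flipk k a
  · intro a _; rw [flipk_flipk]

lemma pointwise_main {K : ℕ} (hK : 1 ≤ K) (w : (Fin K → ℝ) → ℝ)
    (hgood : ∃ (T : Fin K → ℝ) (r : (Fin K → ℝ) → ℝ) (m : ℝ),
      (∀ a ∈ cube K,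
        w a = (∑ k ∈ Finset.univ.filter (fun k => a k = 1), T k) + r a + m) ∧
      2 * (cube K).sup' (cube_nonempty K) (fun a => |r a|)
        < Finset.univ.inf' (univ_fin_nonempty hK) (fun k => |T k|)) :
    (∀ d ∈ cube K, RH w (dstar w) ≤ RH w d) ∧
    (∀ d ∈ cube K, RH w d ≤ RH w (dstar w) → d = dstar w) ∧
    (∀ d ∈ cube K, R01 w (dstar w) ≤ R01 w d) := by
  obtain ⟨T, r, m, hdec, hmar⟩ := hgood
  set M := (cube K).sup' (cube_nonempty K) (fun a => |r a|) with hMdef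
  set τ := Finset.univ.inf' (univ_fin_nonempty hK) (fun k => |T k|) with hτdef
  have hrabs : ∀ a ∈ cube K, |r a| ≤ M := by
    intro a ha
    rw [hMdef]
    exact Finset.le_sup' (fun b => |r b|) ha
  have hTabs : ∀ k, τ ≤ |T k| := by
    intro k
    rw [hτdef]
    exact Finset.inf'_le (fun j => |T j|) (Finset.mem_univ k)
  have hM0 : 0 ≤ M := le_trans (abs_nonneg _) (hrabs _ (cube_nonempty K).choose_spec)
  have hτpos : 0 < τ := by linarith
  -- sign of contrast agrees with sign of T
  have hsign : ∀ k, (0 < T k ∧ 0 < contrast w k) ∨ (T k < 0 ∧ contrast w k < 0) := by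
    intro k
    set s1 := (cube K).filter (fun a => a k = 1) with hs1
    have hone : (fun _ => (1:ℝ)) ∈ s1 := by
      rw [hs1, Finset.mem_filter]
      exact ⟨mem_cube_iff.2 (fun _ => Or.inl rfl), rfl⟩
    have hcard : 0 < (s1.card : ℝ) := by
      have := Finset.card_pos.2 ⟨_, hone⟩
      exact_mod_cast this
    have hterm : ∀ a ∈ s1, w a - w (flipk k a) = T k + (r a - r (flipk k a)) := by
      intro a ha
      rw [Finset.mem_filter] at ha
      have hfc : flipk k a ∈ cube K := flipk_mem k ha.1
      rw [hdec a ha.1, hdec _ hfc]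
      have hfilter : Finset.univ.filter (fun j => flipk k a j = 1)
          = (Finset.univ.filter (fun j => a j = 1)).erase k := by
        ext j
        simp only [Finset.mem_filter, Finset.mem_erase, Finset.mem_univ, true_and]
        by_cases hj : j = k
        · subst hj
          simp [flipk, ha.2]
          norm_num
        · simp [flipk, hj]
      rw [hfilter, Finset.sum_erase_eq_sub (by simp [ha.2])]
      ring
    have hcontr : contrast w k = s1.card * T k + ∑ a ∈ s1, (r a - r (flipk k a)) := by
      rw [contrast, sum_flip k w, ← Finset.sum_sub_distrib]
      rw [Finset.sum_congr rfl hterm, Finset.sum_add_distrib]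
      simp [Finset.sum_const, nsmul_eq_mul]
    have hbound : |∑ a ∈ s1, (r a - r (flipk k a))| ≤ s1.card * (2 * M) := by
      calc |∑ a ∈ s1, (r a - r (flipk k a))| ≤ ∑ a ∈ s1, |r a - r (flipk k a)| :=
            Finset.abs_sum_le_sum_abs _ _
        _ ≤ ∑ _a ∈ s1, (2*M) := by
            apply Finset.sum_le_sum
            intro a ha
            rw [Finset.mem_filter] at ha
            have h1 := hrabs a ha.1
            have h2 := hrabs _ (flipk_mem k ha.1)
            calc |r a - r (flipk k a)| ≤ |r a| + |r (flipk k a)| := abs_sub _ _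
              _ ≤ 2*M := by linarith
        _ = s1.card * (2*M) := by simp [Finset.sum_const, nsmul_eq_mul]
    have hτT := hTabs k
    have hlt : |contrast w k - s1.card * T k| < s1.card * |T k| := by
      have h2 : (s1.card:ℝ) * (2*M) < s1.card * |T k| := by
        apply mul_lt_mul_of_pos_left _ hcard
        have := abs_nonneg (T k)
        linarith
      rw [hcontr]
      calc |s1.card * T k + ∑ a ∈ s1, (r a - r (flipk k a)) - s1.card * T k|
          = |∑ a ∈ s1, (r a - r (flipk k a))| := by ring_nf
        _ ≤ s1.card * (2*M) := hbound
        _ < s1.card * |T k| := h2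
    rw [abs_sub_lt_iff] at hlt
    rcases lt_trichotomy (T k) 0 with h | h | h
    · right
      refine ⟨h, ?_⟩
      have := hlt.1
      rw [abs_of_neg h] at this
      nlinarith
    · exfalso
      rw [h, abs_zero] at hτT
      linarith
    · left
      refine ⟨h, ?_⟩
      have := hlt.2
      rw [abs_of_pos h] at this
      nlinarith
  have hds : ∀ k, (dstar w k = 1 ∧ 0 < T k ∧ 0 < contrast w k)
      ∨ (dstar w k = -1 ∧ T k < 0 ∧ contrast w k < 0) := by
    intro k
    rcases hsign k with ⟨h1, h2⟩ | ⟨h1, h2⟩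
    · exact Or.inl ⟨by simp only [dstar, if_pos h2], h1, h2⟩
    · exact Or.inr ⟨by simp only [dstar]; rw [if_neg (by linarith)], h1, h2⟩
  -- the half-sum representation
  have hsum_half : ∀ d ∈ cube K, (∑ j ∈ Finset.univ.filter (fun j => d j = 1), T j)
      = ∑ j : Fin K, ((1 + d j)/2) * T j := by
    intro d hd
    rw [Finset.sum_filter]
    apply Finset.sum_congr rfl
    intro j _
    rcases mem_cube_iff.1 hd j with h | h <;> rw [h] <;> norm_num
  -- w is maximized at dstar
  have hwmax : ∀ d ∈ cube K, w d ≤ w (dstar w) := by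
    intro d hd
    by_cases hdd : d = dstar w
    · rw [hdd]
    · obtain ⟨k0, hk0⟩ := Function.ne_iff.1 hdd
      have hterm : ∀ j : Fin K, 0 ≤ ((1 + dstar w j)/2) * T j - ((1 + d j)/2) * T j := by
        intro j
        by_cases hj : d j = dstar w j
        · rw [hj]
          have : ((1 + dstar w j)/2) * T j - ((1 + dstar w j)/2) * T j = 0 := by ring
          linarith
        · rcases hds j with ⟨h1, h2, _⟩ | ⟨h1, h2, _⟩
          · rcases mem_cube_iff.1 hd j with hdj | hdj
            · exact absurd (hdj.trans h1.symm) hj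
            · rw [h1, hdj]; linarith
          · rcases mem_cube_iff.1 hd j with hdj | hdj
            · rw [h1, hdj]; linarith
            · exact absurd (hdj.trans h1.symm) hj
      have hterm0 : τ ≤ ((1 + dstar w k0)/2) * T k0 - ((1 + d k0)/2) * T k0 := by
        rcases hds k0 with ⟨h1, h2, _⟩ | ⟨h1, h2, _⟩
        · rcases mem_cube_iff.1 hd k0 with hdj | hdj
          · exact absurd (hdj.trans h1.symm) hk0
          · rw [h1, hdj]
            have := hTabs k0
            rw [abs_of_pos h2] at this
            linarith
        · rcases mem_cube_iff.1 hd k0 with hdj | hdj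
          · rw [h1, hdj]
            have := hTabs k0
            rw [abs_of_neg h2] at this
            linarith
          · exact absurd (hdj.trans h1.symm) hk0
      have hg : w (dstar w) - w d
          = (∑ j : Fin K, (((1 + dstar w j)/2) * T j - ((1 + d j)/2) * T j))
            + (r (dstar w) - r d) := by
        rw [hdec _ (dstar_mem w), hdec _ hd, hsum_half _ (dstar_mem w), hsum_half _ hd,
          Finset.sum_sub_distrib]
        ring
      have hsum := Finset.single_le_sum
        (f := fun j => ((1 + dstar w j)/2) * T j - ((1 + d j)/2) * T j)
        (fun j _ => hterm j) (Finset.mem_univ k0)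
      have habs1 := abs_le.1 (hrabs _ (dstar_mem w))
      have habs2 := abs_le.1 (hrabs _ hd)
      linarith [hterm0]
  -- R01 representation
  have hR01eq : ∀ d ∈ cube K, R01 w d = (∑ a ∈ cube K, w a) - w d := by
    intro d hd
    rw [R01]
    have h1 : ∀ a ∈ cube K, w a * (if a = d then 0 else 1)
        = w a - (if a = d then w a else 0) := by
      intro a _
      by_cases h : a = d <;> simp [h]
    rw [Finset.sum_congr rfl h1, Finset.sum_sub_distrib,
      Finset.sum_ite_eq' (cube K) d w, if_pos hd]
  have hR01 : ∀ d ∈ cube K, R01 w (dstar w) ≤ R01 w d := by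
    intro d hd
    rw [hR01eq _ hd, hR01eq _ (dstar_mem w)]
    have := hwmax d hd
    linarith
  -- RH representation
  have hinner : ∀ d ∈ cube K, ∀ k : Fin K,
      (∑ a ∈ cube K, if a k = d k then 0 else w a)
        = ∑ a ∈ (cube K).filter (fun a => a k = -(d k)), w a := by
    intro d hd k
    rw [Finset.sum_filter]
    apply Finset.sum_congr rfl
    intro a ha
    rcases mem_cube_iff.1 ha k with h1 | h1 <;> rcases mem_cube_iff.1 hd k with h2 | h2 <;>
      rw [h1, h2] <;> norm_num
  have hRHeq : ∀ d ∈ cube K, RH w d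
      = (1/(K:ℝ)) * ∑ k : Fin K, ∑ a ∈ (cube K).filter (fun a => a k = -(d k)), w a := by
    intro d hd
    calc RH w d
        = ∑ a ∈ cube K, ∑ k : Fin K, (1/(K:ℝ)) * (if a k = d k then 0 else w a) := by
          apply Finset.sum_congr rfl
          intro a _
          rw [Finset.mul_sum, Finset.mul_sum]
          apply Finset.sum_congr rfl
          intro k _
          by_cases h : a k = d k
          · simp [h]
          · simp [h]; ring
      _ = ∑ k : Fin K, ∑ a ∈ cube K, (1/(K:ℝ)) * (if a k = d k then 0 else w a) :=
          Finset.sum_comm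
      _ = (1/(K:ℝ)) * ∑ k : Fin K, ∑ a ∈ cube K, (if a k = d k then 0 else w a) := by
          rw [Finset.mul_sum]
          apply Finset.sum_congr rfl
          intro k _
          rw [Finset.mul_sum]
      _ = _ := by
          congr 1
          apply Finset.sum_congr rfl
          intro k _
          exact hinner d hd k
  -- coordinatewise comparison
  have hstrict : ∀ d ∈ cube K, ∀ k : Fin K, d k ≠ dstar w k →
      (∑ a ∈ (cube K).filter (fun a => a k = -(dstar w k)), w a)
        < ∑ a ∈ (cube K).filter (fun a => a k = -(d k)), w a := by
    intro d hd k hne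
    rcases hds k with ⟨h1, _, h3⟩ | ⟨h1, _, h3⟩
    · rcases mem_cube_iff.1 hd k with hdj | hdj
      · exact absurd (hdj.trans h1.symm) hne
      · simp only [h1, hdj, neg_neg]
        rw [contrast] at h3
        linarith
    · rcases mem_cube_iff.1 hd k with hdj | hdj
      · simp only [h1, hdj, neg_neg]
        rw [contrast] at h3
        linarith
      · exact absurd (hdj.trans h1.symm) hne
  have hKpos : 0 < 1/(K:ℝ) := by
    have : (0:ℝ) < K := by exact_mod_cast Nat.lt_of_lt_of_le Nat.zero_lt_one hK
    positivity
  have hle : ∀ d ∈ cube K, ∀ k : Fin K,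
      (∑ a ∈ (cube K).filter (fun a => a k = -(dstar w k)), w a)
        ≤ ∑ a ∈ (cube K).filter (fun a => a k = -(d k)), w a := by
    intro d hd k
    by_cases h : d k = dstar w k
    · simp only [h]
      exact le_refl _
    · exact (hstrict d hd k h).le
  refine ⟨?_, ?_, hR01⟩
  · intro d hd
    rw [hRHeq _ hd, hRHeq _ (dstar_mem w)]
    apply mul_le_mul_of_nonneg_left _ hKpos.le
    exact Finset.sum_le_sum (fun k _ => hle d hd k)
  · intro d hd hled
    by_contra hne
    obtain ⟨k0, hk0⟩ := Function.ne_iff.1 hne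
    have hlt2 : RH w (dstar w) < RH w d := by
      rw [hRHeq _ hd, hRHeq _ (dstar_mem w)]
      apply mul_lt_mul_of_pos_left _ hKpos
      exact Finset.sum_lt_sum (fun k _ => hle d hd k)
        ⟨k0, Finset.mem_univ k0, hstrict d hd k0 hk0⟩
    linarith

open MeasureTheory

/-- Integrated outcome weighted 0-1 risk of a rule `D`. -/
def R01int {Ω : Type*} [MeasurableSpace Ω] (μ : Measure Ω) (K : ℕ)
    (W : Ω → (Fin K → ℝ) → ℝ) (D : Ω → Fin K → ℝ) : ℝ :=
  ∫ x, ∑ a ∈ cube K, W x a * (if a = D x then 0 else 1) ∂μ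

/-- Integrated outcome weighted Hamming risk of a rule `D`. -/
def RHint {Ω : Type*} [MeasurableSpace Ω] (μ : Measure Ω) (K : ℕ)
    (W : Ω → (Fin K → ℝ) → ℝ) (D : Ω → Fin K → ℝ) : ℝ :=
  ∫ x, ∑ a ∈ cube K,
    W x a * ((1 / (K : ℝ)) * ∑ k : Fin K, if a k = D x k then 0 else 1) ∂μ

/-- Fisher consistency under additive treatment effects with small
interactions (integrated form of Theorem 2). -/
theorem fisher_consistency_additive_integrated
    {Ω : Type*} [MeasurableSpace Ω] (μ : Measure Ω)
    (K : ℕ) (hK : 1 ≤ K) (W : Ω → (Fin K → ℝ) → ℝ)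
    (hWmeas : ∀ a ∈ cube K, Measurable (fun x => W x a))
    (hWnonneg : ∀ x, ∀ a ∈ cube K, 0 ≤ W x a)
    (hWint : Integrable (fun x => ∑ a ∈ cube K, W x a) μ)
    (hae : ∀ᵐ x ∂μ, ∃ (T : Fin K → ℝ) (r : (Fin K → ℝ) → ℝ) (m : ℝ),
      (∀ a ∈ cube K,
        W x a = (∑ k ∈ Finset.univ.filter (fun k => a k = 1), T k) + r a + m) ∧
      2 * (cube K).sup' (cube_nonempty K) (fun a => |r a|)
        < Finset.univ.inf' (univ_fin_nonempty hK) (fun k => |T k|))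
    (f : Ω → Fin K → ℝ) (hfmeas : Measurable f) (hfcube : ∀ x, f x ∈ cube K)
    (hfmin : ∀ D : Ω → Fin K → ℝ, Measurable D → (∀ x, D x ∈ cube K) →
      RHint μ K W f ≤ RHint μ K W D) :
    ∀ D : Ω → Fin K → ℝ, Measurable D → (∀ x, D x ∈ cube K) →
      R01int μ K W f ≤ R01int μ K W D := by
  classical
  have hK0 : (0:ℝ) < K := by exact_mod_cast Nat.lt_of_lt_of_le Nat.zero_lt_one hK
  set ds : Ω → Fin K → ℝ := fun x => dstar (W x) with hdsdef
  have hcm : ∀ k, Measurable (fun x => contrast (W x) k) := by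
    intro k
    apply Measurable.sub <;>
      · apply Finset.measurable_sum
        intro a ha
        exact hWmeas a (Finset.mem_of_mem_filter a ha)
  have hdsmeas : Measurable ds := by
    apply measurable_pi_lambda
    intro k
    have h : (fun x => ds x k) = fun x => if 0 < contrast (W x) k then (1:ℝ) else -1 := rfl
    rw [h]
    exact Measurable.ite (measurableSet_lt measurable_const (hcm k))
      measurable_const measurable_const
  have hdscube : ∀ x, ds x ∈ cube K := fun x => dstar_mem (W x)
  -- measurability of the two pointwise risks
  have hrhmeas : ∀ (D : Ω → Fin K → ℝ), Measurable D →
      Measurable (fun x => RH (W x) (D x)) := by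
    intro D hD
    have h : (fun x => RH (W x) (D x)) = fun x => ∑ a ∈ cube K,
        W x a * ((1/(K:ℝ)) * ∑ k : Fin K, if a k = D x k then 0 else 1) := rfl
    rw [h]
    apply Finset.measurable_sum
    intro a ha
    apply Measurable.mul (hWmeas a ha)
    apply Measurable.const_mul
    apply Finset.measurable_sum
    intro k _
    exact Measurable.ite
      (measurableSet_eq_fun measurable_const ((measurable_pi_apply k).comp hD))
      measurable_const measurable_const
  have hr01meas : ∀ (D : Ω → Fin K → ℝ), Measurable D →
      Measurable (fun x => R01 (W x) (D x)) := by
    intro D hD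
    have h : (fun x => R01 (W x) (D x)) = fun x => ∑ a ∈ cube K,
        W x a * (if a = D x then 0 else 1) := rfl
    rw [h]
    apply Finset.measurable_sum
    intro a ha
    apply Measurable.mul (hWmeas a ha)
    have hset : MeasurableSet {x | a = D x} := by
      have h2 : {x | a = D x} = D ⁻¹' {a} := by
        ext x
        simp [eq_comm]
      rw [h2]
      exact hD (measurableSet_singleton a)
    exact Measurable.ite hset measurable_const measurable_const
  -- bounds
  have hrh_bound : ∀ (D : Ω → Fin K → ℝ) (x : Ω),
      0 ≤ RH (W x) (D x) ∧ RH (W x) (D x) ≤ ∑ a ∈ cube K, W x a := by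
    intro D x
    constructor
    · apply Finset.sum_nonneg
      intro a ha
      apply mul_nonneg (hWnonneg x a ha)
      apply mul_nonneg (by positivity)
      apply Finset.sum_nonneg
      intro k _
      by_cases h : a k = D x k <;> simp [h]
    · apply Finset.sum_le_sum
      intro a ha
      have hsum : (∑ k : Fin K, if a k = D x k then (0:ℝ) else 1) ≤ (K:ℝ) := by
        have : (∑ k : Fin K, if a k = D x k then (0:ℝ) else 1) ≤ ∑ _k : Fin K, (1:ℝ) := by
          apply Finset.sum_le_sum
          intro k _
          by_cases h : a k = D x k <;> simp [h]
        simpa using this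
      have h1 : (1/(K:ℝ)) * ∑ k : Fin K, (if a k = D x k then (0:ℝ) else 1) ≤ 1 := by
        have hKinv : (1/(K:ℝ)) * (K:ℝ) = 1 := by field_simp
        calc (1/(K:ℝ)) * ∑ k : Fin K, (if a k = D x k then (0:ℝ) else 1)
            ≤ (1/(K:ℝ)) * (K:ℝ) := by
              apply mul_le_mul_of_nonneg_left hsum
              positivity
          _ = 1 := hKinv
      calc W x a * ((1/(K:ℝ)) * ∑ k : Fin K, (if a k = D x k then (0:ℝ) else 1))
          ≤ W x a * 1 := mul_le_mul_of_nonneg_left h1 (hWnonneg x a ha)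
        _ = W x a := mul_one _
  have hr01_bound : ∀ (D : Ω → Fin K → ℝ) (x : Ω),
      0 ≤ R01 (W x) (D x) ∧ R01 (W x) (D x) ≤ ∑ a ∈ cube K, W x a := by
    intro D x
    constructor
    · apply Finset.sum_nonneg
      intro a ha
      apply mul_nonneg (hWnonneg x a ha)
      by_cases h : a = D x <;> simp [h]
    · apply Finset.sum_le_sum
      intro a ha
      have hw := hWnonneg x a ha
      by_cases h : a = D x
      · rw [h] at hw
        simp [h, hw]
      · simp [h]
  -- integrability
  have hrhint : ∀ (D : Ω → Fin K → ℝ), Measurable D →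
      Integrable (fun x => RH (W x) (D x)) μ := by
    intro D hD
    apply Integrable.mono' hWint (hrhmeas D hD).aestronglyMeasurable
    apply ae_of_all
    intro x
    rw [Real.norm_eq_abs, abs_of_nonneg (hrh_bound D x).1]
    exact (hrh_bound D x).2
  have hr01int : ∀ (D : Ω → Fin K → ℝ), Measurable D →
      Integrable (fun x => R01 (W x) (D x)) μ := by
    intro D hD
    apply Integrable.mono' hWint (hr01meas D hD).aestronglyMeasurable
    apply ae_of_all
    intro x
    rw [Real.norm_eq_abs, abs_of_nonneg (hr01_bound D x).1]
    exact (hr01_bound D x).2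
  -- step 1 : f = ds a.e.
  have hmin' : ∫ x, RH (W x) (f x) ∂μ ≤ ∫ x, RH (W x) (ds x) ∂μ :=
    hfmin ds hdsmeas hdscube
  have hptle : ∀ᵐ x ∂μ, RH (W x) (ds x) ≤ RH (W x) (f x) := by
    filter_upwards [hae] with x hx
    exact (pointwise_main hK (W x) hx).1 (f x) (hfcube x)
  have hint1 : ∫ x, RH (W x) (ds x) ∂μ ≤ ∫ x, RH (W x) (f x) ∂μ :=
    integral_mono_ae (hrhint ds hdsmeas) (hrhint f hfmeas) hptle
  have heqint : ∫ x, (RH (W x) (f x) - RH (W x) (ds x)) ∂μ = 0 := by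
    rw [integral_sub (hrhint f hfmeas) (hrhint ds hdsmeas)]
    linarith
  have hnn : 0 ≤ᵐ[μ] fun x => RH (W x) (f x) - RH (W x) (ds x) := by
    filter_upwards [hptle] with x hx
    simp only [Pi.zero_apply]
    linarith
  have hzero : (fun x => RH (W x) (f x) - RH (W x) (ds x)) =ᵐ[μ] 0 :=
    (integral_eq_zero_iff_of_nonneg_ae hnn
      ((hrhint f hfmeas).sub (hrhint ds hdsmeas))).1 heqint
  have hfds : ∀ᵐ x ∂μ, f x = ds x := by
    filter_upwards [hae, hzero] with x hx h0
    have h1 : RH (W x) (f x) ≤ RH (W x) (ds x) := by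
      have h2 : RH (W x) (f x) - RH (W x) (ds x) = 0 := h0
      linarith
    exact (pointwise_main hK (W x) hx).2.1 (f x) (hfcube x) h1
  -- conclusion
  intro D hD hDcube
  have e1 : ∫ x, R01 (W x) (f x) ∂μ = ∫ x, R01 (W x) (ds x) ∂μ := by
    apply integral_congr_ae
    filter_upwards [hfds] with x hx
    rw [hx]
  have e2 : ∫ x, R01 (W x) (ds x) ∂μ ≤ ∫ x, R01 (W x) (D x) ∂μ := by
    apply integral_mono_ae (hr01int ds hdsmeas) (hr01int D hD)
    filter_upwards [hae] with x hx
    exact (pointwise_main hK (W x) hx).2.2 (D x) (hDcube x)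
  calc R01int μ K W f = ∫ x, R01 (W x) (f x) ∂μ := rfl
    _ = ∫ x, R01 (W x) (ds x) ∂μ := e1
    _ ≤ ∫ x, R01 (W x) (D x) ∂μ := e2
    _ = R01int μ K W D := rfl
end
end

section
/- Let φ : ℝ → ℝ be convex and differentiable at 0 with φ'(0) < 0, and let u, v be real numbers with u > v ≥ 0. Then every global minimizer t ∈ ℝ of the function f(t) = u·φ(t) + v·φ(−t) satisfies t > 0. (Classification-calibration lemma underlying Theorem 3.) -/
/-!
The conditional risk `t ↦ u φ(t) + v φ(-t)` is convex, with derivative `(u - v) φ'(0) < 0` at `0`.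
A convex function lies above its tangent line, so on `(-∞, 0]` it is at least its value at `0`;
a minimizer `t ≤ 0` would therefore make `0` a minimizer too, contradicting Fermat's rule.
-/

open Set

/-- The risk of predicting the score `t` when the label is `+1` with weight `u` and `-1` with
weight `v`. -/
def condRisk (φ : ℝ → ℝ) (u v t : ℝ) : ℝ := u * φ t + v * φ (-t)

theorem ConvexOn.lt_of_forall_le_of_hasDerivAt_neg {f : ℝ → ℝ} {f' x y : ℝ}
    (hf : ConvexOn ℝ univ f) (hf' : HasDerivAt f f' y) (hneg : f' < 0)
    (hx : ∀ s, f x ≤ f s) : y < x := by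
  by_contra! hxy
  have hy_le_x : f y ≤ f x := by
    rcases hxy.eq_or_lt with rfl | hlt
    · exact le_rfl
    · have hslope : slope f x y < 0 :=
        (hf.slope_le_of_hasDerivAt (mem_univ x) (mem_univ y) hlt hf').trans_lt hneg
      rw [slope_def_field, div_neg_iff] at hslope
      rcases hslope with ⟨-, h⟩ | ⟨h, -⟩ <;> linarith
  have hy_min : IsMinOn f univ y := fun s _ => hy_le_x.trans (hx s)
  exact hneg.ne (hy_min.isLocalMin Filter.univ_mem |>.hasDerivAt_eq_zero hf')

theorem convexOn_condRisk {φ : ℝ → ℝ} (hφ : ConvexOn ℝ univ φ) {u v : ℝ} (hu : 0 ≤ u)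
    (hv : 0 ≤ v) : ConvexOn ℝ univ (condRisk φ u v) :=
  (hφ.smul hu).add ((hφ.comp_linearMap (-LinearMap.id)).smul hv)

theorem hasDerivAt_condRisk_zero {φ : ℝ → ℝ} {φ' : ℝ} (hφ : HasDerivAt φ φ' 0) (u v : ℝ) :
    HasDerivAt (condRisk φ u v) ((u - v) * φ') 0 := by
  have hφ_neg : HasDerivAt (fun s => φ (-s)) (-φ') 0 := by
    simpa [Function.comp_def] using hφ.comp_of_eq 0 (hasDerivAt_neg 0) neg_zero.symm
  rw [show (u - v) * φ' = u * φ' + v * -φ' by ring]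
  exact (hφ.const_mul u).add (hφ_neg.const_mul v)

/-- Classification-calibration lemma: for a convex surrogate `φ` with
`φ'(0) < 0` and weights `u > v ≥ 0`, every global minimizer of
`t ↦ u·φ(t) + v·φ(-t)` is strictly positive. -/
theorem calibration_convex_surrogate
    (φ : ℝ → ℝ) (hconv : ConvexOn ℝ Set.univ φ)
    (hdiff : DifferentiableAt ℝ φ 0) (hderiv : deriv φ 0 < 0)
    (u v : ℝ) (hv : 0 ≤ v) (huv : v < u)
    (t : ℝ) (hmin : ∀ s : ℝ, u * φ t + v * φ (-t) ≤ u * φ s + v * φ (-s)) :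
    0 < t :=
  (convexOn_condRisk hconv (hv.trans huv.le) hv).lt_of_forall_le_of_hasDerivAt_neg
    (hasDerivAt_condRisk_zero hdiff.hasDerivAt u v)
    (mul_neg_of_pos_of_neg (sub_pos.mpr huv) hderiv) hmin
end

section
/- Let u > v ≥ 0 be real numbers and let f(t) = u·max(1−t, 0) + v·max(1+t, 0) (the weighted hinge surrogate). Then f attains its global minimum over ℝ at t = 1 with minimum value 2v, every global minimizer t satisfies t ≥ 1 (in particular t > 0), and if v > 0 then t = 1 is the unique global minimizer. (Calibration of the hinge surrogate listed in Theorem 3.) -/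
/-- Calibration of the weighted hinge surrogate
`f(t) = u·max(1-t,0) + v·max(1+t,0)` with `u > v ≥ 0`. -/
theorem calibration_hinge
    (u v : ℝ) (hv : 0 ≤ v) (huv : v < u)
    (f : ℝ → ℝ) (hf : ∀ t : ℝ, f t = u * max (1 - t) 0 + v * max (1 + t) 0) :
    (∀ t : ℝ, f 1 ≤ f t)
    ∧ f 1 = 2 * v
    ∧ (∀ t : ℝ, (∀ s : ℝ, f t ≤ f s) → 1 ≤ t ∧ 0 < t)
    ∧ (0 < v → ∀ t : ℝ, (∀ s : ℝ, f t ≤ f s) → t = 1) := by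
  have hf1 : f 1 = 2 * v := by
    rw [hf]; norm_num; ring
  have hlb : ∀ t : ℝ, 2 * v ≤ f t := by
    intro t
    rw [hf]
    rcases le_total (1 - t) 0 with h1 | h1 <;> rcases le_total (1 + t) 0 with h2 | h2 <;>
      first
        | (rw [max_eq_right h1, max_eq_right h2]; nlinarith)
        | (rw [max_eq_right h1, max_eq_left h2]; nlinarith)
        | (rw [max_eq_left h1, max_eq_right h2]; nlinarith)
        | (rw [max_eq_left h1, max_eq_left h2]; nlinarith)
  have hstrict : ∀ t : ℝ, t < 1 → 2 * v < f t := by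
    intro t ht
    rw [hf]
    rcases le_total (1 + t) 0 with h2 | h2
    · rw [max_eq_right h2, max_eq_left (by linarith)]; nlinarith
    · rw [max_eq_left h2, max_eq_left (by linarith)]; nlinarith
  refine ⟨fun t => hf1 ▸ hlb t, hf1, ?_, ?_⟩
  · intro t hmin
    have := hmin 1
    rw [hf1] at this
    have h1 : 1 ≤ t := by
      by_contra h
      push_neg at h
      exact absurd this (not_le_of_gt (hstrict t h))
    exact ⟨h1, by linarith⟩
  · intro hv0 t hmin
    have := hmin 1
    rw [hf1] at this
    by_contra hne
    rcases lt_or_gt_of_ne hne with h | h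
    · exact absurd this (not_le_of_gt (hstrict t h))
    · have : f t = u * max (1 - t) 0 + v * max (1 + t) 0 := hf t
      rw [max_eq_right (by linarith), max_eq_left (by linarith)] at this
      have h2v := hmin 1
      rw [hf1] at h2v
      nlinarith
end
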